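/- Let 0 < α < d, 1 < p < q < d/α, and x ∈ ℓ^p_q(ℤ^d). There exists a constant C > 0 such that for every k ∈ ℤ^d, |I_α x(k)| ≤ C (Mx(k))^{1 − αq/d} ‖x‖_{ℓ^p_q(ℤ^d)}^{αq/d}. (Discrete Hedberg inequality.) -/

import Mathlib

/-!
Hedberg's argument, discretised. Split the potential into the dyadic shells
`2 ^ l ≤ ‖k - i‖_∞ ≤ 2 ^ (l + 1)`; each lies in the cube `S_{k, 2 ^ (l + 1)}` of at most
`8 ^ d 2 ^ (l d)` points, on which the kernel is at most `2 ^ (-l (d - α))`. The maximal function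
therefore bounds shell `l` by `8 ^ d Mx(k) 2 ^ (l α)`, while Hölder's inequality and the Morrey
norm bound it by `8 ^ d ‖x‖ 2 ^ (l (α - d / q))`, which decays because `α q < d`. Using the first
bound below a radius `2 ^ m` and the second above it leaves two geometric series, and the choice
`2 ^ m ≈ (‖x‖ / Mx(k)) ^ (q / d)` balances them into `Mx(k) ^ (1 - α q / d) ‖x‖ ^ (α q / d)`.
-/

open scoped BigOperators ENNReal

noncomputable section

/-- The discrete cube `S_{m,N} = {k : ‖k - m‖_∞ ≤ N}` in `ℤ^d`. -/
def cubeS (d : ℕ) (m : Fin d → ℤ) (N : ℕ) : Finset (Fin d → ℤ) :=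
  Finset.Icc (fun i => m i - N) (fun i => m i + N)

/-- `R_{m,N}`: the cube `S_{m,N}` with points having some coordinate `m i + N` removed. -/
def cubeR (d : ℕ) (m : Fin d → ℤ) (N : ℕ) : Finset (Fin d → ℤ) :=
  Finset.Ico (fun i => m i - N) (fun i => m i + N)

/-- The sup-norm `‖k‖_∞` of a point of `ℤ^d`, as a natural number. -/
def snorm' (d : ℕ) (k : Fin d → ℤ) : ℕ :=
  Finset.univ.sup fun i => (k i).natAbs

/-- The (centered, odd) discrete Hardy–Littlewood maximal operator. -/
def maxOp (d : ℕ) (x : (Fin d → ℤ) → ℝ) (m : Fin d → ℤ) : ℝ :=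
  ⨆ N : ℕ, (∑ k ∈ cubeS d m N, |x k|) / (2 * N + 1) ^ d

/-- The discrete Morrey norm `‖x‖_{ℓ^p_q(ℤ^d)}`. -/
def morreyNorm (d : ℕ) (p q : ℝ) (x : (Fin d → ℤ) → ℝ) : ℝ :=
  ⨆ mN : (Fin d → ℤ) × ℕ,
    (((2 * mN.2 + 1 : ℝ) ^ d) ^ (1 / q - 1 / p)) *
      (∑ k ∈ cubeS d mN.1 mN.2, |x k| ^ p) ^ (1 / p)

/-- Membership in the discrete Morrey space: the defining supremum is finite. -/
def MemMorrey (d : ℕ) (p q : ℝ) (x : (Fin d → ℤ) → ℝ) : Prop :=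
  BddAbove (Set.range fun mN : (Fin d → ℤ) × ℕ =>
    (((2 * mN.2 + 1 : ℝ) ^ d) ^ (1 / q - 1 / p)) *
      (∑ k ∈ cubeS d mN.1 mN.2, |x k| ^ p) ^ (1 / p))

/-- The discrete Riesz potential `I_α x (k) = ∑_{i ≠ k} x i / ‖k - i‖_∞^{d - α}`. -/
def rieszPot (d : ℕ) (α : ℝ) (x : (Fin d → ℤ) → ℝ) (k : Fin d → ℤ) : ℝ :=
  ∑' i : {i : Fin d → ℤ // i ≠ k}, x i / (snorm' d (k - i) : ℝ) ^ ((d : ℝ) - α)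

open Finset

theorem card_cubeS (d : ℕ) (m : Fin d → ℤ) (N : ℕ) : #(cubeS d m N) = (2 * N + 1) ^ d := by
  have hside (a : ℤ) : (a + N + 1 - (a - N)).toNat = 2 * N + 1 := by omega
  simp only [cubeS, Pi.card_Icc, Int.card_Icc, hside, prod_const, card_univ, Fintype.card_fin]

theorem one_le_snorm'_sub {d : ℕ} {k i : Fin d → ℤ} (h : i ≠ k) :
    1 ≤ snorm' d (k - i) := by
  obtain ⟨j, hj⟩ := Function.ne_iff.mp h
  exact (le_sup (f := fun j => ((k - i) j).natAbs) (mem_univ j)).trans' (by simp; omega)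

theorem mem_cubeS_of_snorm'_sub_le {d : ℕ} {k i : Fin d → ℤ} {N : ℕ}
    (h : snorm' d (k - i) ≤ N) : i ∈ cubeS d k N := by
  have hj (j : Fin d) : k j - N ≤ i j ∧ i j ≤ k j + N := by
    have := (le_sup (f := fun j => ((k - i) j).natAbs) (mem_univ j)).trans h
    rw [Pi.sub_apply] at this
    omega
  exact mem_Icc.mpr ⟨fun j => (hj j).1, fun j => (hj j).2⟩

section Morrey

variable {d : ℕ} {p q : ℝ} {x : (Fin d → ℤ) → ℝ}

theorem morreyNorm_nonneg (hx : MemMorrey d p q x) : 0 ≤ morreyNorm d p q x :=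
  (le_ciSup hx ⟨0, 0⟩).trans' (by positivity)

theorem sum_cubeS_le_morreyNorm (hp : 1 ≤ p) (hx : MemMorrey d p q x)
    (m : Fin d → ℤ) (N : ℕ) :
    ∑ i ∈ cubeS d m N, |x i| ≤
      morreyNorm d p q x * ((2 * N + 1 : ℝ) ^ d) ^ (1 - 1 / q) := by
  set P : ℝ := (2 * N + 1 : ℝ) ^ d
  have hP : 0 < P := by positivity
  have hcard : (#(cubeS d m N) : ℝ) = P := by simp [P, card_cubeS]
  have holder := Real.inner_le_weight_mul_Lp_of_nonneg (cubeS d m N) hp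
    (fun _ => 1) (fun i => |x i|) (fun _ => zero_le_one) (fun i => abs_nonneg _)
  simp only [one_mul, sum_const, nsmul_eq_mul, mul_one, hcard, ← one_div] at holder
  have hmorrey : P ^ (1 / q - 1 / p) * (∑ i ∈ cubeS d m N, |x i| ^ p) ^ (1 / p) ≤
      morreyNorm d p q x := le_ciSup hx ⟨m, N⟩
  calc ∑ i ∈ cubeS d m N, |x i|
      ≤ P ^ (1 - 1 / p) * (∑ i ∈ cubeS d m N, |x i| ^ p) ^ (1 / p) := holder
    _ = P ^ (1 - 1 / q) * (P ^ (1 / q - 1 / p) * (∑ i ∈ cubeS d m N, |x i| ^ p) ^ (1 / p)) := by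
      rw [← mul_assoc, ← Real.rpow_add hP]; ring_nf
    _ ≤ morreyNorm d p q x * P ^ (1 - 1 / q) := by
      rw [mul_comm]; gcongr

theorem average_le_morreyNorm (hp : 1 ≤ p) (hq : 0 ≤ q) (hx : MemMorrey d p q x)
    (m : Fin d → ℤ) (N : ℕ) :
    (∑ i ∈ cubeS d m N, |x i|) / (2 * N + 1 : ℝ) ^ d ≤ morreyNorm d p q x := by
  have hP : 1 ≤ (2 * N + 1 : ℝ) ^ d := one_le_pow₀ (by linarith [N.cast_nonneg (α := ℝ)])
  rw [div_le_iff₀ (by positivity)]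
  refine (sum_cubeS_le_morreyNorm hp hx m N).trans ?_
  gcongr
  · exact morreyNorm_nonneg hx
  · exact (Real.rpow_le_rpow_of_exponent_le hP (by linarith [one_div_nonneg.mpr hq])).trans_eq
      (Real.rpow_one _)

theorem bddAbove_range_average (hp : 1 ≤ p) (hq : 0 ≤ q) (hx : MemMorrey d p q x)
    (m : Fin d → ℤ) :
    BddAbove (Set.range fun N : ℕ => (∑ i ∈ cubeS d m N, |x i|) / (2 * N + 1 : ℝ) ^ d) :=
  ⟨_, Set.forall_mem_range.mpr (average_le_morreyNorm hp hq hx m)⟩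

theorem maxOp_le_morreyNorm (hp : 1 ≤ p) (hq : 0 ≤ q) (hx : MemMorrey d p q x)
    (m : Fin d → ℤ) : maxOp d x m ≤ morreyNorm d p q x :=
  ciSup_le (average_le_morreyNorm hp hq hx m)

theorem sum_cubeS_le_maxOp (hp : 1 ≤ p) (hq : 0 ≤ q) (hx : MemMorrey d p q x)
    (m : Fin d → ℤ) (N : ℕ) :
    ∑ i ∈ cubeS d m N, |x i| ≤ (2 * N + 1 : ℝ) ^ d * maxOp d x m := by
  rw [← div_le_iff₀' (by positivity)]
  exact le_ciSup (bddAbove_range_average hp hq hx m) N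

theorem maxOp_nonneg (hp : 1 ≤ p) (hq : 0 ≤ q) (hx : MemMorrey d p q x) (m : Fin d → ℤ) :
    0 ≤ maxOp d x m :=
  (le_ciSup (bddAbove_range_average hp hq hx m) 0).trans' (by positivity)

theorem eq_zero_of_maxOp_eq_zero (hp : 1 ≤ p) (hq : 0 ≤ q) (hx : MemMorrey d p q x)
    {m : Fin d → ℤ} (hm : maxOp d x m = 0) (i : Fin d → ℤ) : x i = 0 := by
  have hi : |x i| ≤ ∑ j ∈ cubeS d m (snorm' d (m - i)), |x j| :=
    single_le_sum (fun j _ => abs_nonneg (x j)) (mem_cubeS_of_snorm'_sub_le le_rfl)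
  have hcube := sum_cubeS_le_maxOp hp hq hx m (snorm' d (m - i))
  rw [hm, mul_zero] at hcube
  exact abs_nonpos_iff.mp (hi.trans hcube)

end Morrey

theorem sum_range_le_of_le_geom {f : ℕ → ℝ} {a b c c' : ℝ} (ha : 1 < a) (hb₀ : 0 ≤ b)
    (hb₁ : b < 1) (hc : 0 ≤ c) (hc' : 0 ≤ c') {m : ℕ} (hlow : ∀ l < m, f l ≤ c * a ^ l)
    (hhigh : ∀ l, m ≤ l → f l ≤ c' * b ^ l) (L : ℕ) :
    ∑ l ∈ range L, f l ≤ c * a ^ m / (a - 1) + c' * b ^ m / (1 - b) := by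
  rw [← sum_filter_add_sum_filter_not (range L) (· < m)]
  gcongr ?_ + ?_
  · calc ∑ l ∈ range L with l < m, f l
        ≤ ∑ l ∈ range L with l < m, c * a ^ l :=
          sum_le_sum fun l hl => hlow l (mem_filter.mp hl).2
      _ ≤ ∑ l ∈ range m, c * a ^ l :=
          sum_le_sum_of_subset_of_nonneg (fun l hl => mem_range.mpr (mem_filter.mp hl).2)
            (fun _ _ _ => by positivity)
      _ ≤ c * a ^ m / (a - 1) := by
          rw [← mul_sum, geom_sum_eq ha.ne', mul_div_assoc]
          gcongr
          linarith
  · calc ∑ l ∈ range L with ¬l < m, f l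
        ≤ ∑ l ∈ range L with ¬l < m, c' * b ^ l :=
          sum_le_sum fun l hl => hhigh l (not_lt.mp (mem_filter.mp hl).2)
      _ ≤ ∑ l ∈ Ico m L, c' * b ^ l := by
          gcongr
          intro l hl
          simp only [mem_filter, mem_range] at hl
          exact mem_Ico.mpr ⟨not_lt.mp hl.2, hl.1⟩
      _ ≤ c' * b ^ m / (1 - b) := by
          rw [← mul_sum, mul_div_assoc]
          gcongr
          exact geom_sum_Ico_le_of_lt_one hb₀ hb₁

theorem exists_two_pow_mem_Icc {s : ℝ} (hs : 1 ≤ s) :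
    ∃ m : ℕ, s ≤ 2 ^ m ∧ 2 ^ m ≤ 2 * s := by
  obtain ⟨n, hn, hn'⟩ := exists_nat_pow_near hs one_lt_two
  exact ⟨n + 1, hn'.le, by rw [pow_succ']; linarith⟩

theorem mul_rpow_div_eq {M A : ℝ} (hM : 0 < M) (hA : 0 ≤ A) (θ : ℝ) :
    M * (A / M) ^ θ = M ^ (1 - θ) * A ^ θ := by
  rw [Real.div_rpow hA hM.le, Real.rpow_sub hM, Real.rpow_one]
  field_simp

theorem mul_rpow_div_sub_one_eq {M A : ℝ} (hM : 0 < M) (hA : 0 < A) (θ : ℝ) :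
    A * (A / M) ^ (θ - 1) = M ^ (1 - θ) * A ^ θ := by
  rw [← mul_rpow_div_eq hM hA.le, Real.rpow_sub (by positivity), Real.rpow_one]
  field_simp

theorem mul_rpow_le_two_rpow_mul {M A r γ α θ : ℝ} (hM : 0 < M) (hA : 0 ≤ A) (hα : 0 ≤ α)
    (hθ : γ * α = θ) (hr₀ : 0 ≤ r) (hr : r ≤ 2 * (A / M) ^ γ) :
    M * r ^ α ≤ 2 ^ α * (M ^ (1 - θ) * A ^ θ) := calc
  M * r ^ α ≤ M * (2 * (A / M) ^ γ) ^ α := by gcongr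
  _ = 2 ^ α * (M * (A / M) ^ θ) := by
    rw [Real.mul_rpow zero_le_two (by positivity), ← Real.rpow_mul (by positivity), hθ]
    ring
  _ = _ := by rw [mul_rpow_div_eq hM hA]

theorem mul_rpow_le_of_rpow_div_le {M A r γ β θ : ℝ} (hM : 0 < M) (hA : 0 < A) (hβ : β ≤ 0)
    (hθ : γ * β = θ - 1) (hr : (A / M) ^ γ ≤ r) :
    A * r ^ β ≤ M ^ (1 - θ) * A ^ θ := calc
  A * r ^ β ≤ A * ((A / M) ^ γ) ^ β :=
    mul_le_mul_of_nonneg_left (Real.rpow_le_rpow_of_nonpos (by positivity) hr hβ) hA.le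
  _ = A * (A / M) ^ (θ - 1) := by rw [← Real.rpow_mul (by positivity), hθ]
  _ = _ := mul_rpow_div_sub_one_eq hM hA θ

theorem abs_tsum_le_of_sum_abs_le {ι : Type*} {f : ι → ℝ} {B : ℝ}
    (h : ∀ u : Finset ι, ∑ i ∈ u, |f i| ≤ B) : |∑' i, f i| ≤ B := by
  simp only [← Real.norm_eq_abs] at h ⊢
  have hf : Summable fun i => ‖f i‖ := summable_of_sum_le (fun i => norm_nonneg _) h
  exact (norm_tsum_le_tsum_norm hf).trans (hf.tsum_le_of_sum_le h)

section Riesz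

variable {d : ℕ} {α p q : ℝ} {x : (Fin d → ℤ) → ℝ}

theorem two_mul_two_pow_succ_add_one_le (l : ℕ) :
    2 * ((2 ^ (l + 1) : ℕ) : ℝ) + 1 ≤ 8 * 2 ^ l := by
  push_cast
  rw [pow_succ]
  linarith [one_le_pow₀ (M₀ := ℝ) (n := l) one_le_two]

theorem sum_shell_le_sum_cubeS (hαd : α ≤ d) (k : Fin d → ℤ) (l : ℕ)
    {v : Finset (Fin d → ℤ)}
    (hv : ∀ i ∈ v, 2 ^ l ≤ snorm' d (k - i) ∧ snorm' d (k - i) ≤ 2 ^ (l + 1)) :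
    ∑ i ∈ v, |x i| / (snorm' d (k - i) : ℝ) ^ ((d : ℝ) - α) ≤
      (∑ i ∈ cubeS d k (2 ^ (l + 1)), |x i|) / ((2 : ℝ) ^ l) ^ ((d : ℝ) - α) := by
  rw [sum_div]
  calc ∑ i ∈ v, |x i| / (snorm' d (k - i) : ℝ) ^ ((d : ℝ) - α)
      ≤ ∑ i ∈ v, |x i| / ((2 : ℝ) ^ l) ^ ((d : ℝ) - α) := by
        gcongr with i hi
        exact_mod_cast (hv i hi).1
    _ ≤ _ := sum_le_sum_of_subset_of_nonneg
        (fun i hi => mem_cubeS_of_snorm'_sub_le (hv i hi).2) (fun _ _ _ => by positivity)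

theorem sum_shell_le_maxOp (hp : 1 ≤ p) (hq : 0 ≤ q) (hx : MemMorrey d p q x) (hαd : α ≤ d)
    (k : Fin d → ℤ) (l : ℕ) {v : Finset (Fin d → ℤ)}
    (hv : ∀ i ∈ v, 2 ^ l ≤ snorm' d (k - i) ∧ snorm' d (k - i) ≤ 2 ^ (l + 1)) :
    ∑ i ∈ v, |x i| / (snorm' d (k - i) : ℝ) ^ ((d : ℝ) - α) ≤
      8 ^ d * maxOp d x k * ((2 : ℝ) ^ α) ^ l := by
  have hM := maxOp_nonneg hp hq hx k
  calc _ ≤ _ := sum_shell_le_sum_cubeS hαd k l hv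
    _ ≤ (8 * 2 ^ l) ^ d * maxOp d x k / ((2 : ℝ) ^ l) ^ ((d : ℝ) - α) := by
      gcongr
      exact (sum_cubeS_le_maxOp hp hq hx k _).trans
        (by gcongr; exact two_mul_two_pow_succ_add_one_le l)
    _ = 8 ^ d * maxOp d x k * ((2 : ℝ) ^ α) ^ l := by
      rw [Real.rpow_sub (by positivity), Real.rpow_natCast, ← Real.rpow_pow_comm zero_le_two]
      field_simp
      ring

theorem sum_shell_le_morreyNorm (hp : 1 ≤ p) (hq : 1 ≤ q) (hx : MemMorrey d p q x)
    (hαd : α ≤ d) (k : Fin d → ℤ) (l : ℕ) {v : Finset (Fin d → ℤ)}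
    (hv : ∀ i ∈ v, 2 ^ l ≤ snorm' d (k - i) ∧ snorm' d (k - i) ≤ 2 ^ (l + 1)) :
    ∑ i ∈ v, |x i| / (snorm' d (k - i) : ℝ) ^ ((d : ℝ) - α) ≤
      8 ^ d * morreyNorm d p q x * ((2 : ℝ) ^ (α - d / q)) ^ l := by
  have hA := morreyNorm_nonneg hx
  have hq0 : 0 ≤ q := zero_le_one.trans hq
  have hexp : 0 ≤ 1 - 1 / q := by rw [sub_nonneg, div_le_one (by linarith)]; exact hq
  calc _ ≤ _ := sum_shell_le_sum_cubeS hαd k l hv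
    _ ≤ morreyNorm d p q x * ((8 * 2 ^ l) ^ d) ^ (1 - 1 / q) /
          ((2 : ℝ) ^ l) ^ ((d : ℝ) - α) := by
      gcongr
      exact (sum_cubeS_le_morreyNorm hp hx k _).trans
        (by gcongr; exact two_mul_two_pow_succ_add_one_le l)
    _ = morreyNorm d p q x * (8 : ℝ) ^ (d * (1 - 1 / q)) *
          (((2 : ℝ) ^ l) ^ (d * (1 - 1 / q)) / ((2 : ℝ) ^ l) ^ ((d : ℝ) - α)) := by
      rw [mul_pow, Real.mul_rpow (by positivity) (by positivity), ← Real.rpow_natCast,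
        ← Real.rpow_natCast ((2 : ℝ) ^ l), ← Real.rpow_mul (by positivity),
        ← Real.rpow_mul (by positivity)]
      ring
    _ = morreyNorm d p q x * (8 : ℝ) ^ (d * (1 - 1 / q)) * ((2 : ℝ) ^ l) ^ (α - d / q) := by
      rw [← Real.rpow_sub (by positivity)]
      ring_nf
    _ ≤ 8 ^ d * morreyNorm d p q x * ((2 : ℝ) ^ (α - d / q)) ^ l := by
      rw [Real.rpow_pow_comm zero_le_two, mul_comm (8 ^ d : ℝ)]
      gcongr
      rw [← Real.rpow_natCast]
      exact Real.rpow_le_rpow_of_exponent_le (by norm_num)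
        (mul_le_of_le_one_right d.cast_nonneg (by linarith [one_div_nonneg.mpr hq0]))

theorem sum_le_of_dyadic_split (hp : 1 ≤ p) (hq : 1 ≤ q) (hx : MemMorrey d p q x)
    (hα : 0 < α) (hαd : α ≤ d) (hαq : α < d / q) {k : Fin d → ℤ}
    {u : Finset (Fin d → ℤ)}
    (hu : k ∉ u) (m : ℕ) :
    ∑ i ∈ u, |x i| / (snorm' d (k - i) : ℝ) ^ ((d : ℝ) - α) ≤
      8 ^ d * maxOp d x k * ((2 : ℝ) ^ α) ^ m / ((2 : ℝ) ^ α - 1) +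
        8 ^ d * morreyNorm d p q x * ((2 : ℝ) ^ (α - d / q)) ^ m /
          (1 - (2 : ℝ) ^ (α - d / q)) := by
  set g : (Fin d → ℤ) → ℕ := fun i => Nat.log 2 (snorm' d (k - i))
  have hshell (l : ℕ) : ∀ i ∈ {i ∈ u | g i = l},
      2 ^ l ≤ snorm' d (k - i) ∧ snorm' d (k - i) ≤ 2 ^ (l + 1) := by
    intro i hi
    obtain ⟨hiu, rfl⟩ := mem_filter.mp hi
    have hpos : snorm' d (k - i) ≠ 0 :=
      Nat.one_le_iff_ne_zero.mp (one_le_snorm'_sub (ne_of_mem_of_not_mem hiu hu))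
    exact ⟨Nat.pow_log_le_self 2 hpos, (Nat.lt_pow_succ_log_self one_lt_two _).le⟩
  have hq₀ : 0 ≤ q := zero_le_one.trans hq
  rw [← sum_fiberwise_of_maps_to (t := range (u.sup g + 1))
    (fun i hi => mem_range.mpr (Nat.lt_succ_of_le (le_sup hi)))]
  exact sum_range_le_of_le_geom (Real.one_lt_rpow one_lt_two hα) (by positivity)
    (Real.rpow_lt_one_of_one_lt_of_neg one_lt_two (by linarith))
    (by have := maxOp_nonneg hp hq₀ hx k; positivity)
    (by have := morreyNorm_nonneg hx; positivity)
    (fun l _ => sum_shell_le_maxOp hp hq₀ hx hαd k l (hshell l))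
    (fun l _ => sum_shell_le_morreyNorm hp hq hx hαd k l (hshell l)) _

def hedbergConst (d : ℕ) (α q : ℝ) : ℝ :=
  8 ^ d * (2 ^ α / (2 ^ α - 1) + 1 / (1 - 2 ^ (α - d / q)))

theorem hedbergConst_pos (hα : 0 < α) (hαq : α < d / q) : 0 < hedbergConst d α q := by
  have h₁ : 0 < (2 : ℝ) ^ α - 1 := sub_pos.mpr (Real.one_lt_rpow one_lt_two hα)
  have h₂ : 0 < 1 - (2 : ℝ) ^ (α - d / q) :=
    sub_pos.mpr (Real.rpow_lt_one_of_one_lt_of_neg one_lt_two (by linarith))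
  unfold hedbergConst
  positivity

theorem sum_le_hedbergConst_mul (hp : 1 ≤ p) (hq : 1 ≤ q) (hx : MemMorrey d p q x)
    (hα : 0 < α) (hαd : α ≤ d) (hαq : α < d / q) {k : Fin d → ℤ}
    {u : Finset (Fin d → ℤ)} (hu : k ∉ u) :
    ∑ i ∈ u, |x i| / (snorm' d (k - i) : ℝ) ^ ((d : ℝ) - α) ≤
      hedbergConst d α q * maxOp d x k ^ (1 - α * q / d) *
        morreyNorm d p q x ^ (α * q / d) := by
  set M := maxOp d x k
  set A := morreyNorm d p q x
  set θ := α * q / d with hθ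
  have hq₀ : 0 < q := zero_lt_one.trans_le hq
  have hd : (0 : ℝ) < d := by
    have := hα.trans hαq
    rwa [div_pos_iff_of_pos_right hq₀] at this
  rcases (maxOp_nonneg hp hq₀.le hx k).eq_or_lt with hM | hM
  · have hx₀ := eq_zero_of_maxOp_eq_zero hp hq₀.le hx hM.symm
    simp only [hx₀, abs_zero, zero_div, sum_const_zero]
    have := hedbergConst_pos hα hαq
    have := morreyNorm_nonneg hx
    positivity
  have hMA := maxOp_le_morreyNorm hp hq₀.le hx k
  have hA : 0 < A := hM.trans_le hMA
  obtain ⟨m, hsm, hms⟩ :=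
    exists_two_pow_mem_Icc
      (Real.one_le_rpow ((one_le_div hM).mpr hMA) (by positivity : 0 ≤ q / d))
  have hmax := mul_rpow_le_two_rpow_mul hM hA.le hα.le (θ := θ) (by rw [hθ]; ring)
    (by positivity) hms
  have hmor := mul_rpow_le_of_rpow_div_le hM hA (β := α - d / q) (θ := θ) (by linarith)
    (by rw [hθ]; field_simp) hsm
  have h₁ : 0 < (2 : ℝ) ^ α - 1 := sub_pos.mpr (Real.one_lt_rpow one_lt_two hα)
  have h₂ : 0 < 1 - (2 : ℝ) ^ (α - d / q) :=
    sub_pos.mpr (Real.rpow_lt_one_of_one_lt_of_neg one_lt_two (by linarith))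
  calc _ ≤ _ := sum_le_of_dyadic_split hp hq hx hα hαd hαq hu m
    _ = 8 ^ d * (M * ((2 : ℝ) ^ m) ^ α) / (2 ^ α - 1) +
        8 ^ d * (A * ((2 : ℝ) ^ m) ^ (α - d / q)) / (1 - 2 ^ (α - d / q)) := by
      simp only [Real.rpow_pow_comm zero_le_two]
      ring
    _ ≤ 8 ^ d * (2 ^ α * (M ^ (1 - θ) * A ^ θ)) / (2 ^ α - 1) +
        8 ^ d * (M ^ (1 - θ) * A ^ θ) / (1 - 2 ^ (α - d / q)) := by
      gcongr
    _ = _ := by rw [hedbergConst]; ring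

end Riesz

/-- discrete Hedberg inequality. -/
theorem discrete_hedberg (d : ℕ) (α p q : ℝ) (hα : 0 < α) (hαd : α < d)
    (hp : 1 < p) (hpq : p < q) (hq : q < d / α)
    (x : (Fin d → ℤ) → ℝ) (hx : MemMorrey d p q x) :
    ∃ C : ℝ, 0 < C ∧ ∀ k : Fin d → ℤ,
      |rieszPot d α x k| ≤
        C * (maxOp d x k) ^ (1 - α * q / d) * (morreyNorm d p q x) ^ (α * q / d) := by
  have hq₁ : 1 < q := hp.trans hpq
  have hαq : α < d / q := by
    rwa [lt_div_iff₀ (by linarith), mul_comm, ← lt_div_iff₀ hα]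
  refine ⟨hedbergConst d α q, hedbergConst_pos hα hαq, fun k => ?_⟩
  refine abs_tsum_le_of_sum_abs_le fun u => ?_
  have hk : k ∉ u.map (Function.Embedding.subtype _) := by simp
  have := sum_le_hedbergConst_mul hp.le hq₁.le hx hα hαd.le hαq hk
  simpa [sum_map, abs_div, Real.abs_rpow_of_nonneg] using this
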